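/- arXiv:1510.05987 — 2 statements merged into one kernel-verified Lean document; each statement's English description precedes it below -/
import Mathlib

section
/- (Entropy bound) Let χ = (r₁^{a₁},…,r_k^{a_k}) be a character of (ℤ/nℤ)ⁿ where r₁,…,r_k are distinct and a₁+⋯+a_k = n. Then |\widehat{1_S}(χ)| ≤ (multinomial(n; a₁,…,a_k))^{-1/2} · (n!/nⁿ)^{1/2}. -/
/-!
Permuting the coordinates of `χ` does not change `\widehat{1_S}(χ)`, because `S` is invariant
under coordinate permutations. The orbit of `χ = (r₁^{a₁},…,r_k^{a_k})` under `Sₙ` has size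
`n!/(a₁!⋯a_k!)` by orbit–stabilizer, the stabilizer being `∏ Perm {j | χ j = rᵢ}`. So the
multinomial coefficient times `|\widehat{1_S}(χ)|²` is at most the full Parseval sum
`∑_χ |\widehat{1_S}(χ)|² = |S|/nⁿ = n!/nⁿ`.
-/

open Finset

/-- `e(x) = exp(2πi x/n)` for `x ∈ ZMod n`, realizing the identification of the dual of
`ZMod n` with `(1/n)ℤ/ℤ`. -/
noncomputable def eZ (n : ℕ) (x : ZMod n) : ℂ :=
  Complex.exp (2 * Real.pi * Complex.I * (x.val : ℂ) / (n : ℂ))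

/-- The Fourier coefficient `\widehat{1_S}(r₁,…,r_n)` of the set `S` of injective
`n`-tuples in `(ZMod n)ⁿ`, namely `n^{-n} ∑_{x ∈ S} e(-∑ᵢ rᵢ xᵢ)`. -/
noncomputable def fourierS (n : ℕ) [NeZero n] (r : Fin n → ZMod n) : ℂ :=
  ((n : ℂ) ^ n)⁻¹ *
    ∑ x ∈ Finset.univ.filter (fun x : Fin n → ZMod n => Function.Injective x),
      eZ n (-(∑ i, r i * x i))

open Function Equiv MulAction Nat

lemma eZ_eq_stdAddChar (n : ℕ) [NeZero n] (x : ZMod n) : eZ n x = ZMod.stdAddChar x := by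
  rw [ZMod.stdAddChar_apply, ZMod.toCircle_apply]; rfl

namespace AddChar

lemma map_sum_eq_prod {A M ι : Type*} [AddCommMonoid A] [CommMonoid M] (ψ : AddChar A M)
    (s : Finset ι) (f : ι → A) : ψ (∑ i ∈ s, f i) = ∏ i ∈ s, ψ (f i) := by
  induction s using Finset.cons_induction with
  | empty => simp
  | cons i s hi ih => rw [sum_cons, prod_cons, map_add_eq_mul, ih]

variable {R : Type*} [CommRing R] [Fintype R] [DecidableEq R] {ψ : AddChar R ℂ}
  {ι : Type*} [Fintype ι] [DecidableEq ι]

lemma sum_apply_sum_mul_eq_ite (hψ : ψ.IsPrimitive) (d : ι → R) :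
    ∑ r : ι → R, ψ (∑ i, r i * d i) =
      if d = 0 then (Fintype.card R : ℂ) ^ Fintype.card ι else 0 := by
  simp_rw [map_sum_eq_prod ψ]
  rw [← Fintype.prod_sum fun i t => ψ (t * d i)]
  simp_rw [sum_mulShift _ hψ]
  simp only [Nat.cast_ite, Nat.cast_zero, Fintype.prod_ite_zero, funext_iff]
  simp

lemma sum_norm_sq_sum_apply_neg (hψ : ψ.IsPrimitive) (S : Finset (ι → R)) :
    ∑ r : ι → R, ‖∑ x ∈ S, ψ (-∑ i, r i * x i)‖ ^ 2
      = (Fintype.card R : ℝ) ^ Fintype.card ι * #S := by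
  apply Complex.ofReal_injective
  push_cast
  calc ∑ r : ι → R, ((‖∑ x ∈ S, ψ (-∑ i, r i * x i)‖ : ℂ)) ^ 2
      = ∑ r : ι → R, ∑ x ∈ S, ∑ y ∈ S, ψ (∑ i, r i * (y i - x i)) := by
        refine sum_congr rfl fun r _ => ?_
        rw [← Complex.mul_conj', map_sum, sum_mul_sum]
        refine sum_congr rfl fun x _ => sum_congr rfl fun y _ => ?_
        simp only [← map_neg_eq_conj, neg_neg, ← map_add_eq_mul, mul_sub, sum_sub_distrib]
        ring_nf
    _ = ∑ x ∈ S, ∑ y ∈ S,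
          if y - x = 0 then (Fintype.card R : ℂ) ^ Fintype.card ι else 0 := by
        rw [sum_comm]; refine sum_congr rfl fun x _ => ?_
        rw [sum_comm]; refine sum_congr rfl fun y _ => ?_
        exact sum_apply_sum_mul_eq_ite hψ (y - x)
    _ = (Fintype.card R : ℂ) ^ Fintype.card ι * #S := by
        simp [sub_eq_zero, mul_comm]

end AddChar

lemma card_filter_injective {α β : Type*} [Fintype α] [DecidableEq α] [Fintype β]
    [DecidableEq β] :
    #{x : α → β | Injective x} = (Fintype.card β).descFactorial (Fintype.card α) := by
  rw [← Fintype.card_subtype, Fintype.card_congr (subtypeInjectiveEquivEmbedding α β),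
    Fintype.card_embedding_eq]

section Orbit

variable {α ι : Type*} [Fintype α] [Fintype ι] [DecidableEq ι]

lemma DomMulAct.card_stabilizer_perm (f : α → ι) :
    Nat.card (stabilizer (Perm α)ᵈᵐᵃ f) = ∏ i, (#{a | f a = i})! := by
  rw [Nat.card_congr MulOpposite.opEquiv, Nat.card_congr (DomMulAct.stabilizerMulEquiv f).toEquiv,
    Nat.card_pi]
  refine prod_congr rfl fun i _ => ?_
  rw [Nat.card_perm, Nat.card_eq_fintype_card, Fintype.card_subtype]

lemma DomMulAct.card_orbit_perm_mul_prod_factorial (f : α → ι) :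
    Nat.card (orbit (Perm α)ᵈᵐᵃ f) * ∏ i, (#{a | f a = i})! = (Fintype.card α)! := by
  rw [← card_stabilizer_perm, ← Nat.card_prod,
    Nat.card_congr (orbitProdStabilizerEquivGroup _ f),
    ← Nat.card_congr DomMulAct.mk, Nat.card_perm, Nat.card_eq_fintype_card]

variable {κ : Type*} [Fintype κ] {f : α → ι} {s : κ → ι} {a : κ → ℕ}

lemma prod_factorial_card_fiber_eq (hs : Injective s) (hcount : ∀ i, #{j | f j = s i} = a i)
    (hcover : ∀ j, ∃ i, f j = s i) : ∏ z, (#{j | f j = z})! = ∏ i, (a i)! := by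
  classical
  rw [← prod_subset (subset_univ (univ.image s)), prod_image hs.injOn]
  · simp only [hcount]
  · intro z _ hz
    suffices #{j | f j = z} = 0 by rw [this, factorial_zero]
    refine card_eq_zero.2 (filter_eq_empty_iff.2 fun j _ hj => hz ?_)
    obtain ⟨i, hi⟩ := hcover j
    exact mem_image.2 ⟨i, mem_univ i, hi ▸ hj⟩

lemma card_orbit_eq_multinomial (hs : Injective s) (ha : ∑ i, a i = Fintype.card α)
    (hcount : ∀ i, #{j | f j = s i} = a i) (hcover : ∀ j, ∃ i, f j = s i) :
    Nat.card (orbit (Perm α)ᵈᵐᵃ f) = Nat.multinomial univ a := by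
  have horbit := DomMulAct.card_orbit_perm_mul_prod_factorial f
  rw [prod_factorial_card_fiber_eq hs hcount hcover] at horbit
  have hmultinomial := Nat.multinomial_spec univ a
  rw [ha, mul_comm] at hmultinomial
  exact Nat.eq_of_mul_eq_mul_right (prod_pos fun i _ => factorial_pos _)
    (horbit.trans hmultinomial.symm)

end Orbit

section fourierS

variable {n : ℕ} [NeZero n]

lemma fourierS_eq (r : Fin n → ZMod n) : fourierS n r = ((n : ℂ) ^ n)⁻¹ *
    ∑ x ∈ univ.filter (fun x : Fin n → ZMod n => Injective x),
      ZMod.stdAddChar (-∑ i, r i * x i) := by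
  simp only [fourierS, eZ_eq_stdAddChar]

lemma sum_norm_sq_fourierS :
    ∑ r : Fin n → ZMod n, ‖fourierS n r‖ ^ 2 = n ! / (n : ℝ) ^ n := by
  simp_rw [fourierS_eq, norm_mul, mul_pow, ← mul_sum,
    AddChar.sum_norm_sq_sum_apply_neg (ZMod.isPrimitive_stdAddChar n), card_filter_injective,
    ZMod.card, Fintype.card_fin, descFactorial_self]
  simp only [norm_inv, norm_pow, Complex.norm_natCast]
  field_simp

lemma fourierS_comp_perm (χ : Fin n → ZMod n) (σ : Perm (Fin n)) :
    fourierS n (χ ∘ σ) = fourierS n χ := by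
  unfold fourierS
  congr 1
  refine sum_equiv (σ.arrowCongr (Equiv.refl _)) (fun x => ?_) (fun x _ => ?_)
  · simp only [mem_filter_univ]
    exact (EquivLike.injective_comp σ.symm x).symm
  · exact congrArg (eZ n ∘ Neg.neg) (Fintype.sum_equiv σ _ _ fun i => by simp)

lemma card_orbit_mul_norm_sq_fourierS_le (χ : Fin n → ZMod n) :
    Nat.card (orbit (Perm (Fin n))ᵈᵐᵃ χ) * ‖fourierS n χ‖ ^ 2 ≤
      n ! / (n : ℝ) ^ n := by
  classical
  rw [← sum_norm_sq_fourierS, Nat.card_eq_card_toFinset, ← nsmul_eq_mul, ← sum_const]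
  calc ∑ _r ∈ (orbit (Perm (Fin n))ᵈᵐᵃ χ).toFinset, ‖fourierS n χ‖ ^ 2
      = ∑ r ∈ (orbit (Perm (Fin n))ᵈᵐᵃ χ).toFinset, ‖fourierS n r‖ ^ 2 := by
        refine sum_congr rfl fun r hr => ?_
        obtain ⟨σ, rfl⟩ := Set.mem_toFinset.1 hr
        exact congrArg (‖·‖ ^ 2) (fourierS_comp_perm χ _).symm
    _ ≤ ∑ r, ‖fourierS n r‖ ^ 2 := sum_le_univ_sum_of_nonneg fun _ => sq_nonneg _

end fourierS

lemma le_rpow_neg_half_mul_rpow_half {x m B : ℝ} (hm : 0 < m) (h : m * x ^ 2 ≤ B) :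
    x ≤ m ^ (-(1 : ℝ) / 2) * B ^ ((1 : ℝ) / 2) := by
  have hB : 0 ≤ B := le_trans (by positivity) h
  rw [neg_div, Real.rpow_neg hm.le, ← div_eq_inv_mul, ← Real.div_rpow hB hm.le,
    ← Real.sqrt_eq_rpow]
  exact Real.le_sqrt_of_sq_le (by rwa [le_div_iff₀ hm, mul_comm])

/-- Entropy bound: if `χ = (r₁^{a₁},…,r_k^{a_k})` with distinct `rᵢ`, then
`|\widehat{1_S}(χ)| ≤ multinomial(n; a₁,…,a_k)^{-1/2} (n!/nⁿ)^{1/2}`. -/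
theorem fourierS_entropy_bound (n k : ℕ) [NeZero n] (a : Fin k → ℕ) (s : Fin k → ZMod n)
    (hs : Function.Injective s) (ha : ∑ i, a i = n) (χ : Fin n → ZMod n)
    (hcount : ∀ i, (Finset.univ.filter (fun j => χ j = s i)).card = a i)
    (hcover : ∀ j, ∃ i, χ j = s i) :
    ‖fourierS n χ‖ ≤
      ((Nat.multinomial Finset.univ a : ℝ)) ^ (-(1 : ℝ) / 2) *
        ((n.factorial : ℝ) / (n : ℝ) ^ n) ^ ((1 : ℝ) / 2) := by
  have horbit : Nat.card (orbit (Perm (Fin n))ᵈᵐᵃ χ) = Nat.multinomial univ a :=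
    card_orbit_eq_multinomial hs (by rw [ha, Fintype.card_fin]) hcount hcover
  exact le_rpow_neg_half_mul_rpow_half (mod_cast Nat.multinomial_pos _ _)
    (horbit ▸ card_orbit_mul_norm_sq_fourierS_le χ)
end

section
/- The number Q(m,n) = ∑_{k=0}^m (−1)^{m−k} C(n−k,m−k) n^k/k! is the coefficient of X^m in the power series expansion of f(X) = n^{n+1} e^X / (n+X)^{n−m+1} around X = 0. -/
/-!
Leibniz's rule applied to `exp X · ((n + X)^N)⁻¹` with `N = n - m + 1`: every derivative of `exp`
is `exp`, and the `j`-th derivative of `((n + X)^N)⁻¹` at `0` is `(-1)^j N(N+1)⋯(N+j-1) / n^(N+j)`.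
For `j = m - k` the prefactor `n^(n+1)` leaves `n^k`, and the coefficients match because
`C(m,k) · (n-m+1)⋯(n-k) · k! = C(n-k,m-k) · m!`.
-/

open Finset Nat

theorem Nat.choose_mul_ascFactorial_mul_factorial {n m k : ℕ} (hk : k ≤ m) (hm : m ≤ n) :
    m.choose k * (n - m + 1).ascFactorial (m - k) * k ! = (n - k).choose (m - k) * m ! := by
  have hnk : n - m + (m - k) = n - k := by omega
  rw [← add_descFactorial_eq_ascFactorial, hnk, descFactorial_eq_factorial_mul_choose,
    ← choose_mul_factorial_mul_factorial hk]
  ring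

theorem prod_range_neg_natCast_sub {R : Type*} [CommRing R] (N j : ℕ) :
    ∏ i ∈ range j, (-(N : R) - i) = (-1) ^ j * N.ascFactorial j := by
  have hfactor : ∀ i ∈ range j, -(N : R) - i = -1 * ((N + i : ℕ) : R) := fun i _ => by
    push_cast; ring
  rw [prod_congr rfl hfactor, prod_mul_distrib, prod_const, card_range, ascFactorial_eq_prod_range,
    Nat.cast_prod]

theorem iteratedDeriv_inv_const_add_pow {𝕜 : Type*} [NontriviallyNormedField 𝕜]
    (c : 𝕜) (N j : ℕ) (x : 𝕜) :
    iteratedDeriv j (fun X => ((c + X) ^ N)⁻¹) x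
      = (-1) ^ j * N.ascFactorial j * ((c + x) ^ (N + j))⁻¹ := by
  have hzpow : (fun X : 𝕜 => ((c + X) ^ N)⁻¹) = fun X => (c + X) ^ (-(N : ℤ)) := by
    simp only [zpow_neg, zpow_natCast]
  have hshift := congrFun (iteratedDeriv_comp_const_add j (fun y : 𝕜 => y ^ (-(N : ℤ))) c) x
  beta_reduce at hshift
  rw [hzpow, hshift, iteratedDeriv_eq_iterate, iter_deriv_zpow]
  push_cast
  rw [prod_range_neg_natCast_sub, ← neg_add', zpow_neg, ← Nat.cast_add, zpow_natCast]

theorem Complex.iteratedDeriv_exp (k : ℕ) : iteratedDeriv k Complex.exp = Complex.exp := by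
  rw [iteratedDeriv_eq_iterate, Complex.iter_deriv_exp]

/-- `Q(m,n) = ∑_{k≤m} (−1)^{m−k} C(n−k,m−k) n^k/k!` is the `m`-th Taylor coefficient at `0`
of `f(X) = n^{n+1} e^X / (n+X)^{n−m+1}`. -/
theorem Qmn_eq_taylor_coeff (n m : ℕ) (hn : 0 < n) (hm : m ≤ n) :
    (∑ k ∈ Finset.range (m + 1),
        (-1 : ℂ) ^ (m - k) * (Nat.choose (n - k) (m - k) : ℂ) * (n : ℂ) ^ k / k.factorial) =
      iteratedDeriv m (fun X : ℂ => (n : ℂ) ^ (n + 1) * Complex.exp X / (n + X) ^ (n - m + 1)) 0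
        / m.factorial := by
  have hn0 : (n : ℂ) ≠ 0 := Nat.cast_ne_zero.mpr hn.ne'
  have hsplit : (fun X : ℂ => (n : ℂ) ^ (n + 1) * Complex.exp X / (n + X) ^ (n - m + 1))
      = fun X => (n : ℂ) ^ (n + 1) * (Complex.exp X * (((n : ℂ) + X) ^ (n - m + 1))⁻¹) := by
    simp only [div_eq_mul_inv, mul_assoc]
  have hinv : ContDiffAt ℂ m (fun X : ℂ => (((n : ℂ) + X) ^ (n - m + 1))⁻¹) 0 :=
    ContDiffAt.inv (by fun_prop) (by simpa using hn0)
  rw [hsplit, iteratedDeriv_const_mul_field,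
    iteratedDeriv_fun_mul Complex.contDiff_exp.contDiffAt hinv, mul_sum, sum_div]
  refine sum_congr rfl fun k hk => ?_
  have hkm : k ≤ m := Nat.lt_succ_iff.mp (mem_range.mp hk)
  have hpow : (n : ℂ) ^ (n + 1) = (n : ℂ) ^ (n - m + 1 + (m - k)) * (n : ℂ) ^ k := by
    rw [← pow_add]; congr 1; omega
  have hcoeff := congrArg (Nat.cast : ℕ → ℂ) (choose_mul_ascFactorial_mul_factorial hkm hm)
  push_cast at hcoeff
  rw [Complex.iteratedDeriv_exp, iteratedDeriv_inv_const_add_pow, Complex.exp_zero, add_zero, hpow]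
  have hkfac : (k ! : ℂ) ≠ 0 := Nat.cast_ne_zero.mpr k.factorial_ne_zero
  have hmfac : (m ! : ℂ) ≠ 0 := Nat.cast_ne_zero.mpr m.factorial_ne_zero
  field_simp
  linear_combination -hcoeff
end
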